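/- Let B = (b_{ij}) be an n×n real matrix and let l ≠ m be indices. Then Σ_{k≠l} b_{km} f_{lk} · adj(B(k|k)) · b_{·k} = b_{lm} det(B(l|l)). -/

import Mathlib

open Matrix

/-- The `l`-th column of `B` with its `l`-th entry deleted (a vector in `ℝⁿ`). -/
def delCol {n : ℕ} (B : Matrix (Fin (n + 1)) (Fin (n + 1)) ℝ) (l : Fin (n + 1)) :
    Fin n → ℝ :=
  fun i => B (l.succAbove i) l

/-- The `l`-th row of `B` with its `l`-th entry deleted (a row vector in `ℝⁿ`). -/
def delRow {n : ℕ} (B : Matrix (Fin (n + 1)) (Fin (n + 1)) ℝ) (l : Fin (n + 1)) :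
    Fin n → ℝ :=
  fun j => B l (l.succAbove j)

/-- `B(i|j)`: the matrix obtained from `B` by deleting row `i` and column `j`. -/
def delMat {n : ℕ} (B : Matrix (Fin (n + 1)) (Fin (n + 1)) ℝ) (i j : Fin (n + 1)) :
    Matrix (Fin n) (Fin n) ℝ :=
  B.submatrix i.succAbove j.succAbove

/-- `f m l` (for `m ≠ l`): the standard basis row vector of `ℝⁿ` selecting the
coordinate corresponding to the original index `m` after index `l` has been deleted;
it equals `eₘ` if `m < l` and `e_{m-1}` if `m > l`. -/
def fSel {n : ℕ} (m l : Fin (n + 1)) : Fin n → ℝ :=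
  fun j => if l.succAbove j = m then 1 else 0

/-!
Each summand is an off-diagonal cofactor of `B`: for `k ≠ l`,
`f_{lk} · adj(B(k|k)) · b_{·k} = -adj(B)_{lk}`, which one sees by expanding `det B(k|l)` along
the column coming from column `k` of `B`. The sum is then `-∑_{k≠l} adj(B)_{lk} b_{km}`, and
`adj(B) · B = det B · 1` has vanishing `(l, m)` entry, so the sum equals
`adj(B)_{ll} b_{lm} = b_{lm} det B(l|l)`.
-/

namespace Matrix

variable {R : Type*} [CommRing R]

theorem sum_erase_adjugate_mul_of_ne {ι : Type*} [Fintype ι] [DecidableEq ι]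
    (A : Matrix ι ι R) {l m : ι} (hlm : l ≠ m) :
    ∑ k ∈ Finset.univ.erase l, adjugate A l k * A k m = -(adjugate A l l * A l m) := by
  have h := congrFun (congrFun (adjugate_mul A) l) m
  rw [smul_apply, one_apply_ne hlm, smul_zero, mul_apply,
    ← Finset.add_sum_erase _ _ (Finset.mem_univ l)] at h
  exact eq_neg_of_add_eq_zero_right h

theorem adjugate_fin_succ_apply_self {n : ℕ} (A : Matrix (Fin (n + 1)) (Fin (n + 1)) R)
    (i : Fin (n + 1)) :
    adjugate A i i = det (A.submatrix i.succAbove i.succAbove) := by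
  rw [adjugate_fin_succ_eq_det_submatrix, Even.neg_one_pow ⟨i, rfl⟩, one_mul]

theorem adjugate_submatrix_succAbove_mulVec_apply {n : ℕ}
    (A : Matrix (Fin (n + 2)) (Fin (n + 2)) R) (k : Fin (n + 2)) (j : Fin (n + 1)) :
    ((A.submatrix k.succAbove k.succAbove).adjugate *ᵥ fun i => A (k.succAbove i) k) j =
      -adjugate A (k.succAbove j) k := by
  set l := k.succAbove j
  set j' := j.predAbove k
  have hl : l.succAbove j' = k := Fin.succAbove_succAbove_predAbove k j
  have hcols : ∀ t, l.succAbove (j'.succAbove t) = k.succAbove (j.succAbove t) :=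
    Fin.succAbove_succAbove_succAbove_predAbove k j
  have hsign : ∀ i : Fin (n + 1),
      (-1 : R) ^ (i + j : ℕ) = -((-1) ^ (k + l : ℕ) * (-1) ^ (i + j' : ℕ)) := by
    intro i
    have hswap : (-1 : R) ^ (l + j' : ℕ) = -(-1) ^ (k + j : ℕ) :=
      Fin.neg_one_pow_succAbove_add_predAbove k j
    have hsq : (-1 : R) ^ (k : ℕ) * (-1) ^ (k : ℕ) = 1 := by
      rw [← pow_add, Even.neg_one_pow ⟨k, rfl⟩]
    simp only [pow_add] at hswap ⊢
    linear_combination (-1) ^ (k : ℕ) * (-1) ^ (i : ℕ) * hswap -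
      (-1) ^ (i : ℕ) * (-1) ^ (j : ℕ) * hsq
  rw [adjugate_fin_succ_eq_det_submatrix, det_succ_column _ j', Finset.mul_sum,
    ← Finset.sum_neg_distrib]
  simp only [mulVec, dotProduct]
  refine Finset.sum_congr rfl fun i _ => ?_
  rw [adjugate_fin_succ_eq_det_submatrix, hsign i]
  simp only [submatrix_apply, submatrix_submatrix, Function.comp_def, hl, hcols]
  ring

end Matrix

theorem fSel_succAbove_dotProduct {n : ℕ} (k : Fin (n + 1)) (j : Fin n) (v : Fin n → ℝ) :
    fSel (k.succAbove j) k ⬝ᵥ v = v j := by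
  simp [fSel, dotProduct, Fin.succAbove_right_injective.eq_iff]

/-- For an `(n+1) × (n+1)` real matrix `B` and indices `l ≠ m`:
`∑_{k≠l} b_{km} f_{lk} · adj(B(k|k)) · b_{·k} = b_{lm} det B(l|l)`. -/
theorem sum_fSel_adjugate_eq_det_minor
    {n : ℕ} (B : Matrix (Fin (n + 1)) (Fin (n + 1)) ℝ)
    (l m : Fin (n + 1)) (hlm : l ≠ m) :
    ∑ k ∈ Finset.univ.erase l,
        B k m * (fSel l k ⬝ᵥ ((delMat B k k).adjugate *ᵥ delCol B k)) =
      B l m * (delMat B l l).det := by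
  cases n with
  | zero => exact absurd (Subsingleton.elim (α := Fin 1) l m) hlm
  | succ n =>
    have hterm : ∀ k ∈ Finset.univ.erase l,
        B k m * (fSel l k ⬝ᵥ ((delMat B k k).adjugate *ᵥ delCol B k)) =
          -(adjugate B l k * B k m) := by
      intro k hk
      obtain ⟨j, rfl⟩ := Fin.exists_succAbove_eq (Finset.ne_of_mem_erase hk).symm
      unfold delMat delCol
      rw [fSel_succAbove_dotProduct, adjugate_submatrix_succAbove_mulVec_apply]
      ring
    rw [Finset.sum_congr rfl hterm, Finset.sum_neg_distrib, sum_erase_adjugate_mul_of_ne B hlm,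
      neg_neg, adjugate_fin_succ_apply_self, delMat, mul_comm]
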